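/- In the right-angled Coxeter group W(Γ) with a fixed linear order on the vertices, let C' be a clique and x' an element of type C'. Then the children of x' (elements x with x = x'·x_i for some vertex i, l(x) = l(x')+1, and max τ(x) = i) are in bijection with the branches of C': for each clique C with C \ C' = {i}, C equal to the maximal clique of C' ∪ {i} containing i, and i > j for all j ∈ C, there is exactly one child of type C, and there are no other children. -/

import Mathlib

open scoped Classical

variable {V : Type*} {M : Type*} {G : Type*}

noncomputable def mlen [Monoid M] (f : V → M) (x : M) : ℕ :=
  sInf {n | ∃ w : List V, (w.map f).prod = x ∧ w.length = n}

def mtype [Monoid M] (f : V → M) (x : M) : Set V :=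
  {i | ∃ w : List V, (w.map f).prod = x ∧ w.length = mlen f x ∧ w.getLast? = some i}

def geval [Group G] (f : V → G) : V × Bool → G := fun l => if l.2 then f l.1 else (f l.1)⁻¹

noncomputable def glen [Group G] (f : V → G) (x : G) : ℕ :=
  sInf {n | ∃ w : List (V × Bool), (w.map (geval f)).prod = x ∧ w.length = n}

def gtype [Group G] (f : V → G) (x : G) : Set V :=
  {i | ∃ w : List (V × Bool), (w.map (geval f)).prod = x ∧ w.length = glen f x ∧
    w.getLast?.map Prod.fst = some i}

def graphMonoidRel (Γ : SimpleGraph V) : FreeMonoid V → FreeMonoid V → Prop :=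
  fun a b => ∃ i j, Γ.Adj i j ∧ a = FreeMonoid.of i * FreeMonoid.of j ∧
    b = FreeMonoid.of j * FreeMonoid.of i

abbrev GraphMonoid (Γ : SimpleGraph V) := (conGen (graphMonoidRel Γ)).Quotient

def GraphMonoid.gen (Γ : SimpleGraph V) (i : V) : GraphMonoid Γ :=
  (conGen (graphMonoidRel Γ)).mk' (FreeMonoid.of i)

def raagRels (Γ : SimpleGraph V) : Set (FreeGroup V) :=
  {r | ∃ i j, Γ.Adj i j ∧
    r = FreeGroup.of i * FreeGroup.of j * (FreeGroup.of i)⁻¹ * (FreeGroup.of j)⁻¹}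

abbrev RAAG (Γ : SimpleGraph V) := PresentedGroup (raagRels Γ)

def RAAG.gen (Γ : SimpleGraph V) (i : V) : RAAG Γ := PresentedGroup.of i

def racgRels (Γ : SimpleGraph V) : Set (FreeGroup V) :=
  raagRels Γ ∪ {r | ∃ i, r = FreeGroup.of i * FreeGroup.of i}

abbrev RACG (Γ : SimpleGraph V) := PresentedGroup (racgRels Γ)

def RACG.gen (Γ : SimpleGraph V) (i : V) : RACG Γ := PresentedGroup.of i

noncomputable def cliquePoly [Fintype V] (Γ : SimpleGraph V) : Polynomial ℚ :=
  ∑ k ∈ Finset.range (Fintype.card V + 1), ((Γ.cliqueFinset k).card : ℚ) • Polynomial.X ^ k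

def Branch [LinearOrder V] (Γ : SimpleGraph V) (C' C : Set V) : Prop :=
  ∃ i, i ∉ C' ∧ C = insert i {j ∈ C' | Γ.Adj i j} ∧ ∀ j ∈ C, j ≠ i → j < i

def WeakBranch (Γ : SimpleGraph V) (C' C : Set V) : Prop :=
  ∃ i, i ∉ C' ∧ C = insert i {j ∈ C' | Γ.Adj i j}

noncomputable def WeakBranchF (Γ : SimpleGraph V) (C' C : Finset V) : Prop :=
  ∃ i, i ∉ C' ∧ C = insert i (C'.filter (Γ.Adj i))

noncomputable def linkF [Fintype V] (Γ : SimpleGraph V) (C : Finset V) : Finset V :=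
  Finset.univ.filter fun x => x ∉ C ∧ ∀ c ∈ C, Γ.Adj x c

def LinkRegular [Fintype V] (Γ : SimpleGraph V) : Prop :=
  ∀ C₁ C₂ : Finset V, Γ.IsClique (C₁ : Set V) → Γ.IsClique (C₂ : Set V) →
    C₁.card = C₂.card → (linkF Γ C₁).card = (linkF Γ C₂).card

/-!
`W(Γ)` is the Coxeter group of a right-angled Coxeter matrix; `l` is its Coxeter length and
`τ(x)` its right descent set. For an ascent `i` of `x'`, the descent set of `x' s_i` is
`{i} ∪ {j ∈ τ(x') | j ~ i}`. A descent `j ≠ i` of `x' s_i` is adjacent to `i`: two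
non-adjacent descents would yield reduced words ending in arbitrarily long alternating words in
`i` and `j`, but such words are reduced (look at their image in the infinite dihedral group).
For `j ~ i`, the inversion parity cocycle shows that `s_j` is a descent of `x' s_i` iff it is
one of `x'`. Hence the children of `x'` are the `x' s_i` with `i ∉ τ(x')` greatest in
`τ(x' s_i) = {i} ∪ {j ∈ τ(x') | j ~ i}`, one for each branch of `τ(x')`.
-/

open CoxeterSystem

/-- Mathlib encodes `m i j = ∞` as `0`. -/
def CoxeterMatrix.IsRightAngled {B : Type*} (Mx : CoxeterMatrix B) : Prop :=
  ∀ i j, i ≠ j → Mx i j = 2 ∨ Mx i j = 0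

theorem CoxeterMatrix.IsRightAngled.isLiftable {B : Type*} {Mx : CoxeterMatrix B}
    (hM : Mx.IsRightAngled) [Monoid G] {f : B → G} (hsq : ∀ i, f i * f i = 1)
    (hcomm : ∀ i j, Mx i j = 2 → Commute (f i) (f j)) : Mx.IsLiftable f := by
  intro i j
  by_cases hij : i = j
  · rw [hij, Mx.diagonal, pow_one, hsq]
  rcases hM i j hij with h | h
  · rw [h, pow_two, mul_assoc, ← mul_assoc (f j), ← (hcomm i j h).eq, mul_assoc, hsq, mul_one,
      hsq]
  · rw [h, pow_zero]

namespace DihedralGroup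

/-- Word length in the infinite dihedral group with respect to the generators `sr 0`, `sr 1`:
`r k = (sr 0 * sr 1) ^ k` has length `2 |k|` and `sr k` has length `|2 k - 1|`. -/
def infLength : DihedralGroup 0 → ℕ
  | r k => (2 * k).natAbs
  | sr k => (2 * k - 1).natAbs

@[simp]
theorem infLength_one : infLength 1 = 0 := rfl

theorem infLength_mul_sr_le (g : DihedralGroup 0) {k : ZMod 0} (hk : k = 0 ∨ k = 1) :
    infLength (g * sr k) ≤ infLength g + 1 := by
  obtain rfl | rfl := hk <;> cases g <;>
    simp only [infLength, r_mul_sr, sr_mul_sr] <;> omega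

theorem infLength_alternating (n : ℕ) :
    infLength ((if Even n then 1 else sr 1) * (sr 0 * sr 1) ^ (n / 2)) = n := by
  rw [sr_mul_sr, sub_zero, r_one_pow]
  obtain ⟨m, rfl | rfl⟩ := Nat.even_or_odd' n <;>
    simp [infLength, show (2 * m + 1) / 2 = m by omega] <;> omega

end DihedralGroup

namespace CoxeterSystem

variable {B W : Type*} [Group W] {Mx : CoxeterMatrix B} (cs : CoxeterSystem Mx W)

local prefix:100 "s " => cs.simple
local prefix:100 "π " => cs.wordProd
local prefix:100 "ℓ " => cs.length

theorem mlen_simple_eq_length : mlen cs.simple = cs.length := by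
  funext w
  obtain ⟨ω, hω, rfl⟩ := cs.exists_isReduced w
  refine le_antisymm (Nat.sInf_le ⟨ω, rfl, hω.symm⟩) (le_csInf ⟨ω.length, ω, rfl, rfl⟩ ?_)
  rintro n ⟨ω', hω', rfl⟩
  exact hω' ▸ cs.length_wordProd_le ω'

theorem mtype_simple_eq_setOf_isRightDescent (w : W) :
    mtype cs.simple w = {i | cs.IsRightDescent w i} := by
  ext i
  change (∃ ω, π ω = w ∧ ω.length = mlen cs.simple w ∧ ω.getLast? = some i) ↔
    cs.IsRightDescent w i
  rw [cs.mlen_simple_eq_length]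
  constructor
  · rintro ⟨ω, rfl, hlen, hlast⟩
    obtain ⟨ω', rfl⟩ : ∃ ω', ω = ω' ++ [i] :=
      ⟨ω.dropLast, (List.dropLast_append_getLast? i hlast).symm⟩
    have : π (ω' ++ [i]) * s i = π ω' := by
      rw [cs.wordProd_append, wordProd_singleton, simple_mul_simple_cancel_right]
    unfold IsRightDescent
    rw [this, ← hlen, List.length_append, List.length_singleton]
    exact Nat.lt_succ_of_le (cs.length_wordProd_le ω')
  · intro hi
    obtain ⟨ω, hω, hprod⟩ := cs.exists_isReduced (w * s i)
    refine ⟨ω ++ [i], ?_, ?_, by simp⟩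
    · rw [cs.wordProd_append, ← hprod, wordProd_singleton, simple_mul_simple_cancel_right]
    · rw [List.length_append, ← hω.eq, ← hprod, List.length_singleton]
      exact cs.isRightDescent_iff.mp hi

theorem commute_simple_of_eq_two {i j : B} (h : Mx i j = 2) : Commute (s i) (s j) := by
  have h2 := cs.simple_mul_simple_pow i j
  rwa [h, pow_two, mul_eq_one_iff_eq_inv, mul_inv_rev, inv_simple, inv_simple] at h2

theorem simple_conj_eq_iff {i : B} {t u : W} : s i * t * s i = u ↔ t = s i * u * s i := by
  constructor <;> rintro rfl <;> simp [mul_assoc, simple_mul_simple_cancel_left]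

theorem simple_conj_eq_simple_iff {i : B} {t : W} : s i * t * s i = s i ↔ t = s i := by
  rw [simple_conj_eq_iff, simple_mul_simple_self, one_mul]

theorem simple_conj_simple_of_eq_two {i j : B} (h : Mx i j = 2) : s i * s j * s i = s j := by
  rw [(cs.commute_simple_of_eq_two h).eq, mul_assoc, simple_mul_simple_self, mul_one]

/-- Tits' action of a simple reflection on `W × Bool`, the classical route to the exchange
condition; in a right-angled system the Coxeter relations between these permutations reduce to
commutation. -/
noncomputable def parityPerm (i : B) : Equiv.Perm (W × Bool) :=
  Function.Involutive.toPerm (fun p => (s i * p.1 * s i, xor p.2 (decide (p.1 = s i))))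
    fun ⟨t, ε⟩ => by
      simp only [Prod.mk.injEq, simple_conj_eq_simple_iff, Bool.xor_assoc, Bool.xor_self,
        Bool.xor_false, and_true]
      exact cs.simple_conj_eq_iff.mpr rfl

theorem parityPerm_apply (i : B) (t : W) (ε : Bool) :
    cs.parityPerm i (t, ε) = (s i * t * s i, xor ε (decide (t = s i))) := rfl

theorem parityPerm_mul_self (i : B) : cs.parityPerm i * cs.parityPerm i = 1 :=
  Equiv.ext (Function.Involutive.toPerm_involutive _)

theorem parityPerm_commute {i j : B} (h : Mx i j = 2) :
    Commute (cs.parityPerm i) (cs.parityPerm j) := by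
  have hc := (cs.commute_simple_of_eq_two h).eq
  have hji : s j * s i * s j = s i :=
    cs.simple_conj_simple_of_eq_two (by rwa [Mx.symmetric])
  ext ⟨t, ε⟩
  · simp only [Equiv.Perm.mul_apply, parityPerm_apply, mul_assoc]
    rw [← mul_assoc (s i), hc, mul_assoc]
  · simp only [Equiv.Perm.mul_apply, parityPerm_apply, cs.simple_conj_eq_iff,
      cs.simple_conj_simple_of_eq_two h, hji]
    cases decide (t = s i) <;> cases decide (t = s j) <;> simp

noncomputable def parityHom (hM : Mx.IsRightAngled) : W →* Equiv.Perm (W × Bool) :=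
  cs.lift ⟨cs.parityPerm, hM.isLiftable cs.parityPerm_mul_self fun _ _ => cs.parityPerm_commute⟩

/-- The parity of the number of occurrences of `t` in the right inversion sequence of any word
for `w` (`inversionParity_wordProd`). -/
noncomputable def inversionParity (hM : Mx.IsRightAngled) (w t : W) : Bool :=
  (cs.parityHom hM w (t, false)).2

theorem parityHom_simple (hM : Mx.IsRightAngled) (i : B) :
    cs.parityHom hM (s i) = cs.parityPerm i :=
  cs.lift_apply_simple _ i

theorem parityHom_apply (hM : Mx.IsRightAngled) (w t : W) (ε : Bool) :
    cs.parityHom hM w (t, ε) = (w * t * w⁻¹, xor ε (cs.inversionParity hM w t)) := by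
  induction w using cs.simple_induction_left generalizing t ε with
  | one => simp [inversionParity]
  | mul_simple_left w i ih =>
    rw [inversionParity, map_mul, Equiv.Perm.mul_apply, Equiv.Perm.mul_apply, ih, ih]
    simp only [parityHom_simple, parityPerm_apply, mul_inv_rev, inv_simple,
      mul_assoc, Bool.false_xor, Bool.xor_assoc]

theorem inversionParity_mul_simple (hM : Mx.IsRightAngled) (w t : W) (i : B) :
    cs.inversionParity hM (w * s i) t =
      xor (decide (t = s i)) (cs.inversionParity hM w (s i * t * s i)) := by
  rw [inversionParity, map_mul, Equiv.Perm.mul_apply, parityHom_simple, parityPerm_apply,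
    parityHom_apply, Bool.false_xor]

theorem count_map_conj_simple (i : B) (l : List W) (t : W) :
    (l.map (MulAut.conj (s i))).count t = l.count (s i * t * s i) := by
  rw [← List.count_map_of_injective l _ (MulAut.conj (s i)).injective]
  congr 1
  rw [MulAut.conj_apply, inv_simple, eq_comm, cs.simple_conj_eq_iff]

theorem inversionParity_wordProd (hM : Mx.IsRightAngled) (ω : List B) (t : W) :
    cs.inversionParity hM (π ω) t = decide (Odd ((cs.rightInvSeq ω).count t)) := by
  induction ω using List.reverseRecOn generalizing t with
  | nil => simp [inversionParity]
  | append_singleton ω i ih =>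
    rw [← List.concat_eq_append, wordProd_concat, rightInvSeq_concat, inversionParity_mul_simple,
      ih, List.concat_eq_append, List.count_append, count_map_conj_simple, List.count_singleton]
    by_cases h : t = s i
    · simp [h, Nat.odd_add_one, ← Nat.not_even_iff_odd]
    · simp [h, Ne.symm h]

theorem exists_eraseIdx_of_inversionParity (hM : Mx.IsRightAngled) {ω : List B} {t : W}
    (h : cs.inversionParity hM (π ω) t = true) : ∃ k < ω.length, π ω * t = π (ω.eraseIdx k) := by
  rw [inversionParity_wordProd, decide_eq_true_iff] at h
  obtain ⟨k, hk, rfl⟩ := List.getElem_of_mem (List.count_pos_iff.mp h.pos)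
  refine ⟨k, by simpa using hk, ?_⟩
  rw [← cs.wordProd_mul_getD_rightInvSeq, List.getD_eq_getElem]

theorem length_mul_lt_of_inversionParity (hM : Mx.IsRightAngled) {w t : W}
    (h : cs.inversionParity hM w t = true) : ℓ (w * t) < ℓ w := by
  obtain ⟨ω, hω, rfl⟩ := cs.exists_isReduced w
  obtain ⟨k, hk, heq⟩ := cs.exists_eraseIdx_of_inversionParity hM h
  rw [heq, hω.eq]
  refine (cs.length_wordProd_le _).trans_lt ?_
  rw [List.length_eraseIdx_of_lt hk]
  omega

theorem isRightDescent_iff_inversionParity (hM : Mx.IsRightAngled) (w : W) (i : B) :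
    cs.IsRightDescent w i ↔ cs.inversionParity hM w (s i) = true := by
  refine ⟨fun hi => ?_, cs.length_mul_lt_of_inversionParity hM⟩
  by_contra hw
  have : cs.inversionParity hM (w * s i) (s i) = true := by
    rw [inversionParity_mul_simple, simple_mul_simple_self, one_mul, eq_false_of_ne_true hw]
    simp
  have := cs.length_mul_lt_of_inversionParity hM this
  rw [simple_mul_simple_cancel_right] at this
  exact absurd hi (not_lt.mpr this.le)

theorem exists_eraseIdx_of_isRightDescent (hM : Mx.IsRightAngled) {ω : List B} {i : B}
    (h : cs.IsRightDescent (π ω) i) : ∃ k < ω.length, π ω * s i = π (ω.eraseIdx k) :=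
  cs.exists_eraseIdx_of_inversionParity hM ((cs.isRightDescent_iff_inversionParity hM _ _).mp h)

theorem simple_injective (hM : Mx.IsRightAngled) : Function.Injective cs.simple := by
  intro i j h
  by_contra hij
  have hf : Mx.IsLiftable fun k => if k = i then (-1 : ℤˣ) else 1 :=
    hM.isLiftable (fun k => by split_ifs <;> simp) fun _ _ _ => Commute.all _ _
  have := congrArg (cs.lift ⟨_, hf⟩) h
  simp [Ne.symm hij] at this

theorem isRightDescent_mul_simple_iff_of_eq_two (hM : Mx.IsRightAngled) {i j : B}
    (h : Mx i j = 2) (w : W) : cs.IsRightDescent (w * s i) j ↔ cs.IsRightDescent w j := by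
  have hij : j ≠ i := by rintro rfl; simp at h
  rw [isRightDescent_iff_inversionParity cs hM, isRightDescent_iff_inversionParity cs hM,
    inversionParity_mul_simple, cs.simple_conj_simple_of_eq_two h,
    decide_eq_false ((cs.simple_injective hM).ne hij), Bool.false_xor]

open DihedralGroup

noncomputable def toInfDihedral (hM : Mx.IsRightAngled) {i j : B} (h0 : Mx i j = 0) :
    W →* DihedralGroup 0 :=
  cs.lift ⟨fun k => if k = i then sr 0 else if k = j then sr 1 else 1, hM.isLiftable
    (fun k => by split_ifs <;> simp)
    fun a b hab => by
      have : ¬((a = i ∨ a = j) ∧ (b = i ∨ b = j)) := by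
        rintro ⟨rfl | rfl, rfl | rfl⟩ <;> simp_all [Mx.symmetric]
      by_cases ha : a = i ∨ a = j
      · have hb : b ≠ i ∧ b ≠ j := by tauto
        simp [hb.1, hb.2]
      · push Not at ha
        simp [ha.1, ha.2]⟩

theorem toInfDihedral_simple (hM : Mx.IsRightAngled) {i j : B} (h0 : Mx i j = 0) (k : B) :
    cs.toInfDihedral hM h0 (s k) = if k = i then sr 0 else if k = j then sr 1 else 1 :=
  cs.lift_apply_simple _ k

theorem infLength_toInfDihedral_wordProd_le (hM : Mx.IsRightAngled) {i j : B} (h0 : Mx i j = 0)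
    (ω : List B) : (cs.toInfDihedral hM h0 (π ω)).infLength ≤ ω.length := by
  induction ω using List.reverseRecOn with
  | nil => simp [infLength_one]
  | append_singleton ω k ih =>
    rw [← List.concat_eq_append, wordProd_concat, map_mul, toInfDihedral_simple,
      List.length_concat]
    split_ifs
    · exact (infLength_mul_sr_le _ (Or.inl rfl)).trans (by omega)
    · exact (infLength_mul_sr_le _ (Or.inr rfl)).trans (by omega)
    · rw [mul_one]
      omega

theorem isReduced_alternatingWord (hM : Mx.IsRightAngled) {i j : B} (h0 : Mx i j = 0) (n : ℕ) :
    cs.IsReduced (alternatingWord i j n) := by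
  have hij : j ≠ i := by rintro rfl; simp at h0
  refine le_antisymm (cs.length_wordProd_le _) ?_
  obtain ⟨ω, hω, hπ⟩ := cs.exists_isReduced (π alternatingWord i j n)
  calc (alternatingWord i j n).length
      = (cs.toInfDihedral hM h0 (π alternatingWord i j n)).infLength := by
        rw [prod_alternatingWord_eq_mul_pow, map_mul, map_pow, map_mul,
          apply_ite (cs.toInfDihedral hM h0), toInfDihedral_simple, toInfDihedral_simple,
          if_pos rfl, if_neg hij, if_pos rfl, map_one, length_alternatingWord,
          infLength_alternating]
    _ ≤ ω.length := hπ ▸ cs.infLength_toInfDihedral_wordProd_le hM h0 ω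
    _ = ℓ (π alternatingWord i j n) := by rw [hπ, hω.eq]

theorem wordProd_alternatingWord_succ_ne (hM : Mx.IsRightAngled) {i j : B} (h0 : Mx i j = 0)
    (k q : ℕ) : π (alternatingWord i j (k + 1)) ≠ π ((alternatingWord j i k).eraseIdx q) := by
  intro h
  have hred := cs.isReduced_alternatingWord hM h0 (k + 1)
  have hle := cs.length_wordProd_le ((alternatingWord j i k).eraseIdx q)
  rw [IsReduced, h] at hred
  rw [List.length_eraseIdx, length_alternatingWord] at hle
  simp only [length_alternatingWord] at hred
  split_ifs at hle <;> omega

/-- The exchange condition at the descent `j` cannot delete a letter of the alternating suffix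
(`wordProd_alternatingWord_succ_ne`), so it deletes one of `ρ` and the suffix grows. -/
theorem exists_isReduced_append_alternatingWord (hM : Mx.IsRightAngled) {i j : B}
    (h0 : Mx i j = 0) {w : W} (hi : cs.IsRightDescent w i) (hj : cs.IsRightDescent w j)
    (k : ℕ) :
    ∃ ρ, cs.IsReduced (ρ ++ alternatingWord i j k) ∧ w = π (ρ ++ alternatingWord i j k) := by
  induction k generalizing i j with
  | zero => simpa [alternatingWord] using cs.exists_isReduced w
  | succ k ih =>
    obtain ⟨ρ, hred, rfl⟩ := ih (by rwa [Mx.symmetric]) hj hi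
    obtain ⟨p, hp, hex⟩ := cs.exists_eraseIdx_of_isRightDescent hM hj
    rcases lt_or_ge p ρ.length with hpρ | hpρ
    · rw [List.eraseIdx_append_of_lt_length hpρ] at hex
      have hw : π (ρ.eraseIdx p ++ alternatingWord i j (k + 1)) =
          π (ρ ++ alternatingWord j i k) := by
        rw [alternatingWord_succ, List.concat_eq_append, ← List.append_assoc, wordProd_append,
          ← hex, wordProd_singleton, simple_mul_simple_cancel_right]
      refine ⟨ρ.eraseIdx p, ?_, hw.symm⟩
      rw [IsReduced, hw, hred.eq]
      simp only [List.length_append, List.length_eraseIdx_of_lt hpρ, length_alternatingWord]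
      omega
    · rw [List.eraseIdx_append_of_length_le hpρ, wordProd_append, wordProd_append, mul_assoc,
        mul_right_inj] at hex
      refine absurd ?_ (cs.wordProd_alternatingWord_succ_ne hM h0 k (p - ρ.length))
      rw [alternatingWord_succ, List.concat_eq_append, wordProd_append, wordProd_singleton, hex]

theorem eq_two_of_isRightDescent (hM : Mx.IsRightAngled) {i j : B} (hij : i ≠ j) {w : W}
    (hi : cs.IsRightDescent w i) (hj : cs.IsRightDescent w j) : Mx i j = 2 := by
  refine (hM i j hij).resolve_right fun h0 => ?_
  obtain ⟨ρ, hred, hw⟩ := cs.exists_isReduced_append_alternatingWord hM h0 hi hj (ℓ w + 1)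
  have := hred.eq
  rw [← hw, List.length_append, length_alternatingWord] at this
  omega

theorem isRightDescent_mul_simple_iff (hM : Mx.IsRightAngled) {w : W} {i : B}
    (hi : ¬cs.IsRightDescent w i) (j : B) :
    cs.IsRightDescent (w * s i) j ↔ j = i ∨ Mx i j = 2 ∧ cs.IsRightDescent w j := by
  have hii : cs.IsRightDescent (w * s i) i := by
    rwa [isRightDescent_iff_not_isRightDescent_mul, simple_mul_simple_cancel_right]
  rcases eq_or_ne j i with rfl | hji
  · simpa using hii
  have h2 : cs.IsRightDescent (w * s i) j → Mx i j = 2 :=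
    cs.eq_two_of_isRightDescent hM hji.symm hii
  simp only [hji, false_or]
  exact ⟨fun hj => ⟨h2 hj, (cs.isRightDescent_mul_simple_iff_of_eq_two hM (h2 hj) w).mp hj⟩,
    fun ⟨h, hj⟩ => (cs.isRightDescent_mul_simple_iff_of_eq_two hM h w).mpr hj⟩

end CoxeterSystem

namespace RACG

variable {Γ : SimpleGraph V}

theorem mk_eq_one_of_mem_racgRels {r : FreeGroup V} (h : r ∈ racgRels Γ) :
    PresentedGroup.mk (racgRels Γ) r = 1 :=
  (QuotientGroup.eq_one_iff r).mpr (Subgroup.subset_normalClosure h)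

variable (Γ) in
theorem gen_mul_self (i : V) : gen Γ i * gen Γ i = 1 :=
  mk_eq_one_of_mem_racgRels (Or.inr ⟨i, rfl⟩)

theorem gen_commute {i j : V} (h : Γ.Adj i j) : Commute (gen Γ i) (gen Γ j) := by
  have : gen Γ i * gen Γ j * (gen Γ i)⁻¹ * (gen Γ j)⁻¹ = 1 :=
    mk_eq_one_of_mem_racgRels (Or.inl ⟨i, j, h, rfl⟩)
  exact mul_inv_eq_iff_eq_mul.mp (mul_inv_eq_one.mp this)

noncomputable def lift [Group G] (f : V → G) (hsq : ∀ i, f i * f i = 1)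
    (hcomm : ∀ i j, Γ.Adj i j → Commute (f i) (f j)) : RACG Γ →* G :=
  PresentedGroup.toGroup (f := f) <| by
    rintro r (⟨i, j, h, rfl⟩ | ⟨i, rfl⟩)
    · simp [(hcomm i j h).eq]
    · simp [hsq]

theorem lift_gen [Group G] (f : V → G) (hsq : ∀ i, f i * f i = 1)
    (hcomm : ∀ i j, Γ.Adj i j → Commute (f i) (f j)) (i : V) :
    lift f hsq hcomm (gen Γ i) = f i :=
  PresentedGroup.toGroup.of _

variable (Γ) in
noncomputable def coxeterMatrix : CoxeterMatrix V where
  M := Matrix.of fun i j => if i = j then 1 else if Γ.Adj i j then 2 else 0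
  isSymm := by
    ext i j
    simp only [Matrix.transpose_apply, Matrix.of_apply, eq_comm (a := i), Γ.adj_comm]
  diagonal := by simp
  off_diagonal i j h := by simp only [Matrix.of_apply, if_neg h]; split <;> omega

theorem coxeterMatrix_eq_two_iff {i j : V} : coxeterMatrix Γ i j = 2 ↔ Γ.Adj i j := by
  by_cases hij : i = j <;> by_cases h : Γ.Adj i j <;> simp [coxeterMatrix, hij, h]

variable (Γ) in
theorem isRightAngled_coxeterMatrix : (coxeterMatrix Γ).IsRightAngled := by
  intro i j hij
  by_cases h : Γ.Adj i j <;> simp [coxeterMatrix, hij, h]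

variable (Γ) in
theorem isLiftable_gen : (coxeterMatrix Γ).IsLiftable (gen Γ) :=
  (isRightAngled_coxeterMatrix Γ).isLiftable (gen_mul_self Γ)
    fun _ _ h => gen_commute (coxeterMatrix_eq_two_iff.mp h)

variable (Γ) in
noncomputable def coxeterEquiv : RACG Γ ≃* (coxeterMatrix Γ).Group :=
  let cs := (coxeterMatrix Γ).toCoxeterSystem
  MonoidHom.toMulEquiv
    (lift cs.simple cs.simple_mul_simple_self
      fun _ _ h => cs.commute_simple_of_eq_two (coxeterMatrix_eq_two_iff.mpr h))
    (cs.lift ⟨gen Γ, isLiftable_gen Γ⟩)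
    (PresentedGroup.ext fun i => by
      change cs.lift _ (lift _ _ _ (gen Γ i)) = gen Γ i
      rw [lift_gen, lift_apply_simple])
    (cs.ext_simple fun i => by
      rw [MonoidHom.comp_apply, lift_apply_simple, lift_gen]; rfl)

variable (Γ) in
noncomputable def coxeterSystem : CoxeterSystem (coxeterMatrix Γ) (RACG Γ) := ⟨coxeterEquiv Γ⟩

variable (Γ) in
theorem coxeterSystem_simple : (coxeterSystem Γ).simple = gen Γ :=
  funext <| (coxeterMatrix Γ).toCoxeterSystem.lift_apply_simple (isLiftable_gen Γ)

theorem mlen_gen : mlen (gen Γ) = (coxeterSystem Γ).length := by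
  rw [← coxeterSystem_simple, CoxeterSystem.mlen_simple_eq_length]

theorem mtype_gen (x : RACG Γ) : mtype (gen Γ) x = {i | (coxeterSystem Γ).IsRightDescent x i} := by
  rw [← coxeterSystem_simple, CoxeterSystem.mtype_simple_eq_setOf_isRightDescent]

theorem mlen_mul_gen_eq_add_one_iff {x : RACG Γ} {i : V} :
    mlen (gen Γ) (x * gen Γ i) = mlen (gen Γ) x + 1 ↔ i ∉ mtype (gen Γ) x := by
  rw [mlen_gen, mtype_gen, Set.notMem_ofPred_iff, CoxeterSystem.not_isRightDescent_iff,
    coxeterSystem_simple]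

theorem mtype_mul_gen {x : RACG Γ} {i : V} (hi : i ∉ mtype (gen Γ) x) :
    mtype (gen Γ) (x * gen Γ i) = insert i {j ∈ mtype (gen Γ) x | Γ.Adj i j} := by
  rw [mtype_gen, Set.notMem_ofPred_iff] at hi
  ext j
  rw [mtype_gen, mtype_gen, ← coxeterSystem_simple]
  simp [(coxeterSystem Γ).isRightDescent_mul_simple_iff (isRightAngled_coxeterMatrix Γ) hi,
    coxeterMatrix_eq_two_iff, and_comm]

end RACG

theorem racg_children_general (m : ℕ) (Γ : SimpleGraph (Fin m)) (C' : Set (Fin m))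
    (x' : RACG Γ) (hx' : mtype (RACG.gen Γ) x' = C') :
    (∀ C : Set (Fin m), Branch Γ C' C →
      ∃! x : RACG Γ,
        (∃ i : Fin m, x = x' * RACG.gen Γ i ∧
          mlen (RACG.gen Γ) x = mlen (RACG.gen Γ) x' + 1 ∧
          IsGreatest (mtype (RACG.gen Γ) x) i) ∧
        mtype (RACG.gen Γ) x = C) ∧
    (∀ x : RACG Γ,
      (∃ i : Fin m, x = x' * RACG.gen Γ i ∧
        mlen (RACG.gen Γ) x = mlen (RACG.gen Γ) x' + 1 ∧
        IsGreatest (mtype (RACG.gen Γ) x) i) →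
      Branch Γ C' (mtype (RACG.gen Γ) x)) := by
  subst hx'
  constructor
  · rintro C ⟨i, hi, rfl, hmax⟩
    have hgreat : IsGreatest (insert i {j ∈ mtype (RACG.gen Γ) x' | Γ.Adj i j}) i :=
      ⟨Set.mem_insert i _, fun j hj => (eq_or_ne j i).elim le_of_eq fun h => (hmax j hj h).le⟩
    refine ⟨x' * RACG.gen Γ i, ⟨⟨i, rfl, RACG.mlen_mul_gen_eq_add_one_iff.mpr hi, ?_⟩,
      RACG.mtype_mul_gen hi⟩, ?_⟩
    · rwa [RACG.mtype_mul_gen hi]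
    · rintro _ ⟨⟨i', rfl, -, hgreat'⟩, htype⟩
      rw [htype] at hgreat'
      rw [hgreat'.unique hgreat]
  · rintro _ ⟨i, rfl, hlen, hgreat⟩
    have hi := RACG.mlen_mul_gen_eq_add_one_iff.mp hlen
    rw [RACG.mtype_mul_gen hi] at hgreat ⊢
    exact ⟨i, hi, rfl, fun j hj hji => lt_of_le_of_ne (hgreat.2 hj) hji⟩

theorem racg_children (m : ℕ) (Γ : SimpleGraph (Fin m)) (C' : Set (Fin m))
    (hC' : Γ.IsClique C') (x' : RACG Γ) (hx' : mtype (RACG.gen Γ) x' = C') :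
    (∀ C : Set (Fin m), Branch Γ C' C →
      ∃! x : RACG Γ,
        (∃ i : Fin m, x = x' * RACG.gen Γ i ∧
          mlen (RACG.gen Γ) x = mlen (RACG.gen Γ) x' + 1 ∧
          IsGreatest (mtype (RACG.gen Γ) x) i) ∧
        mtype (RACG.gen Γ) x = C) ∧
    (∀ x : RACG Γ,
      (∃ i : Fin m, x = x' * RACG.gen Γ i ∧
        mlen (RACG.gen Γ) x = mlen (RACG.gen Γ) x' + 1 ∧
        IsGreatest (mtype (RACG.gen Γ) x) i) →
      Branch Γ C' (mtype (RACG.gen Γ) x)) :=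
  racg_children_general m Γ C' x' hx'
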